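/- arXiv:2510.10363 — 8 statements merged into one kernel-verified Lean document; each statement's English description precedes it below -/
import Mathlib

section
/- Let S : X ⊇ dom S → X be a self-adjoint positive operator on a Hilbert space X and let A be a closed densely defined operator with S = A*A. Then dom (S^{1/2}) = dom A and ‖S^{1/2} x‖ = ‖A x‖ for all x ∈ dom A (i.e. |A| := (A*A)^{1/2} and A are metrically equivalent). -/
open LinearPMap

local notation "⟪" x ", " y "⟫" => @inner ℂ _ _ x y

set_option linter.unusedSectionVars false

section A1



variable {X Y : Type*} [NormedAddCommGroup X] [InnerProductSpace ℂ X] [CompleteSpace X]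
    [NormedAddCommGroup Y] [InnerProductSpace ℂ Y] [CompleteSpace Y]

/-- von Neumann: `1 + A†A` is surjective for closed densely defined `A`. -/
lemma vonNeumann_surj (A : X →ₗ.[ℂ] Y) (hclosed : A.IsClosed)
    (hdense : Dense (A.domain : Set X)) (z : X) :
    ∃ (x : X) (hx : x ∈ A.domain) (hAx : A ⟨x, hx⟩ ∈ A.adjoint.domain),
      x + A.adjoint ⟨A ⟨x, hx⟩, hAx⟩ = z := by
  set e := WithLp.prodContinuousLinearEquiv 2 ℂ X Y with he
  set G : Submodule ℂ (WithLp 2 (X × Y)) :=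
    A.graph.comap (e.toLinearEquiv : WithLp 2 (X × Y) →ₗ[ℂ] X × Y) with hG
  have hGc : IsClosed (G : Set (WithLp 2 (X × Y))) := by
    have : (G : Set (WithLp 2 (X × Y))) = e ⁻¹' (A.graph : Set (X × Y)) := rfl
    rw [this]
    exact hclosed.preimage e.continuous
  haveI : CompleteSpace G := hGc.completeSpace_coe
  obtain ⟨a, ha, b, hb, hab⟩ := G.exists_add_mem_mem_orthogonal (e.symm (z, 0))
  -- `e a = (x, A x)` for some `x ∈ dom A`
  obtain ⟨ya, hya1, hya2⟩ := A.mem_graph_iff.mp (ha : e a ∈ A.graph)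
  -- orthogonality data
  have hb' : ∀ x : A.domain, ⟪(x : X), (e b).1⟫ + ⟪A x, (e b).2⟫ = 0 := by
    intro x
    have hm : e.symm ((x : X), A x) ∈ G := by
      show e (e.symm _) ∈ A.graph
      rw [e.apply_symm_apply]
      exact A.mem_graph x
    have h0 := (Submodule.mem_orthogonal G b).mp hb _ hm
    rw [WithLp.prod_inner_apply] at h0
    exact h0
  set u₀ := (e b).1 with hu₀
  set v₀ := (e b).2 with hv₀
  have hkey : ∀ x : A.domain, ⟪-u₀, (x : X)⟫ = ⟪v₀, A x⟫ := by
    intro x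
    have h1 := hb' x
    have h2 : ⟪u₀, (x : X)⟫ + ⟪v₀, A x⟫ = 0 := by
      have := congrArg (starRingEnd ℂ) h1
      simpa [inner_conj_symm] using this
    rw [inner_neg_left]
    linear_combination -h2
  have hv₀mem : v₀ ∈ A.adjoint.domain :=
    mem_adjoint_domain_of_exists v₀ ⟨-u₀, hkey⟩
  have hAv₀ : A.adjoint ⟨v₀, hv₀mem⟩ = -u₀ := adjoint_apply_eq hdense _ hkey
  -- decompose (z, 0)
  have hz : (z, 0) = e a + e b := by rw [← _root_.map_add, ← hab, e.apply_symm_apply]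
  have hz1 : z = (e a).1 + (e b).1 := congrArg Prod.fst hz
  have hz2 : (0 : Y) = (e a).2 + (e b).2 := congrArg Prod.snd hz
  have hz1' : z = (ya : X) + u₀ := by rw [hya1, hu₀]; exact hz1
  have hz2' : (0 : Y) = A ya + v₀ := by rw [hya2, hv₀]; exact hz2
  have hv₀eq : A ya = -v₀ := by rw [eq_neg_iff_add_eq_zero]; exact hz2'.symm
  have hAya : A ya ∈ A.adjoint.domain := hv₀eq ▸ neg_mem hv₀mem
  refine ⟨(ya : X), ya.2, hAya, ?_⟩
  have hval : A.adjoint ⟨A ya, hAya⟩ = u₀ := by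
    have hsub : (⟨A ya, hAya⟩ : A.adjoint.domain) = -⟨v₀, hv₀mem⟩ := by
      ext
      simpa using hv₀eq
    rw [hsub, LinearPMap.map_neg, hAv₀, neg_neg]
  rw [hval]
  exact hz1'.symm

end A1

section A2



variable {X Z : Type*} [NormedAddCommGroup X] [InnerProductSpace ℂ X] [CompleteSpace X]
    [NormedAddCommGroup Z] [InnerProductSpace ℂ Z] [CompleteSpace Z]

/-- Abstract core lemma: if every element of the graph of a closed operator `T` orthogonal
to a subspace `N` of the graph vanishes, then `N` is dense in the graph. -/
lemma graph_core (T : X →ₗ.[ℂ] Z) (hT : T.IsClosed) (N : Submodule ℂ (X × Z))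
    (hNT : N ≤ T.graph)
    (hker : ∀ p ∈ T.graph, (∀ q ∈ N, ⟪q.1, p.1⟫ + ⟪q.2, p.2⟫ = 0) → p = (0 : X × Z)) :
    ∀ p ∈ T.graph, p ∈ closure (N : Set (X × Z)) := by
  intro p hp
  set e := WithLp.prodContinuousLinearEquiv 2 ℂ X Z with he
  set M : Submodule ℂ (WithLp 2 (X × Z)) :=
    N.comap (e.toLinearEquiv : WithLp 2 (X × Z) →ₗ[ℂ] X × Z) with hM
  set c := M.topologicalClosure with hc
  haveI : CompleteSpace c := (Submodule.isClosed_topologicalClosure M).completeSpace_coe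
  obtain ⟨a, ha, b, hb, hab⟩ := c.exists_add_mem_mem_orthogonal (e.symm p)
  have hMpre : (M : Set (WithLp 2 (X × Z))) = e ⁻¹' (N : Set (X × Z)) := rfl
  have hclosure : (c : Set (WithLp 2 (X × Z))) = e ⁻¹' closure (N : Set (X × Z)) := by
    rw [hc, Submodule.topologicalClosure_coe, hMpre]
    exact (e.toHomeomorph.preimage_closure _).symm
  have haN : e a ∈ closure (N : Set (X × Z)) := by
    have := ha
    rw [← SetLike.mem_coe, hclosure] at this
    exact this
  have hclN : closure (N : Set (X × Z)) ⊆ (T.graph : Set (X × Z)) :=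
    closure_minimal hNT hT
  have hpe : p = e a + e b := by rw [← _root_.map_add, ← hab, e.apply_symm_apply]
  have hebG : e b ∈ T.graph := by
    have h1 : e a ∈ T.graph := hclN haN
    have : e b = p - e a := by rw [hpe]; abel
    rw [this]
    exact T.graph.sub_mem hp h1
  have horth : ∀ q ∈ N, ⟪q.1, (e b).1⟫ + ⟪q.2, (e b).2⟫ = 0 := by
    intro q hq
    have hmem : e.symm q ∈ M := by
      show e (e.symm q) ∈ N
      rw [e.apply_symm_apply]; exact hq
    have hbM : b ∈ Mᗮ := Submodule.orthogonal_le (M.le_topologicalClosure) hb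
    have h0 := (Submodule.mem_orthogonal M b).mp hbM _ hmem
    rw [WithLp.prod_inner_apply] at h0
    exact h0
  have hzero : e b = 0 := hker _ hebG horth
  rw [hpe, hzero, add_zero]
  exact haN

end A2

section A3


variable {X Z W : Type*} [NormedAddCommGroup X] [InnerProductSpace ℂ X] [CompleteSpace X]
    [NormedAddCommGroup Z] [InnerProductSpace ℂ Z] [CompleteSpace Z]
    [NormedAddCommGroup W] [InnerProductSpace ℂ W] [CompleteSpace W]

/-- Transfer along a common core: if `(x, T x)` is in the closure of a subspace `N` whose
elements `(d, T d)` have `d` in a common domain `D` on which `‖T d‖ = ‖U d‖`, and `U` is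
closed, then `x ∈ dom U` and `‖U x‖ = ‖T x‖`. -/
lemma transfer (T : X →ₗ.[ℂ] Z) (U : X →ₗ.[ℂ] W) (hU : U.IsClosed)
    (D : Submodule ℂ X) (hDT : D ≤ T.domain) (hDU : D ≤ U.domain)
    (hnorm : ∀ (y : X) (hy : y ∈ D), ‖T ⟨y, hDT hy⟩‖ = ‖U ⟨y, hDU hy⟩‖)
    (N : Submodule ℂ (X × Z))
    (hN : ∀ q ∈ N, ∃ hd : q.1 ∈ D, q.2 = T ⟨q.1, hDT hd⟩)
    (x : T.domain) (hx : ((x : X), T x) ∈ closure (N : Set (X × Z))) :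
    ∃ hxU : (x : X) ∈ U.domain, ‖U ⟨x, hxU⟩‖ = ‖T x‖ := by
  obtain ⟨u, hu, hulim⟩ := mem_closure_iff_seq_limit.mp hx
  -- extract the domain elements
  have key : ∀ n, ∃ hd : (u n).1 ∈ D, (u n).2 = T ⟨(u n).1, hDT hd⟩ := fun n => hN _ (hu n)
  choose hd hud using key
  set d : ℕ → X := fun n => (u n).1 with hdef
  set z : ℕ → W := fun n => U ⟨d n, hDU (hd n)⟩ with hzdef
  -- componentwise limits
  have h1 : Filter.Tendsto (fun n => (u n).1) Filter.atTop (nhds (x : X)) :=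
    ((continuous_fst.tendsto _).comp hulim)
  have h2 : Filter.Tendsto (fun n => (u n).2) Filter.atTop (nhds (T x)) :=
    ((continuous_snd.tendsto _).comp hulim)
  -- the auxiliary sequence is Cauchy
  have hdist : ∀ m n, dist (z m) (z n) = dist ((u m).2) ((u n).2) := by
    intro m n
    have hsub : d m - d n ∈ D := D.sub_mem (hd m) (hd n)
    have hTsub : T ⟨d m - d n, hDT hsub⟩ = T ⟨d m, hDT (hd m)⟩ - T ⟨d n, hDT (hd n)⟩ := by
      have : (⟨d m - d n, hDT hsub⟩ : T.domain)
          = ⟨d m, hDT (hd m)⟩ - ⟨d n, hDT (hd n)⟩ := rfl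
      rw [this, T.map_sub]
    have hUsub : U ⟨d m - d n, hDU hsub⟩ = z m - z n := by
      have : (⟨d m - d n, hDU hsub⟩ : U.domain)
          = ⟨d m, hDU (hd m)⟩ - ⟨d n, hDU (hd n)⟩ := rfl
      rw [this, U.map_sub]
    rw [dist_eq_norm, dist_eq_norm, ← hUsub, ← hnorm _ hsub, hTsub, hud m, hud n]
  have hcz : CauchySeq z := by
    have hc2 : CauchySeq (fun n => (u n).2) := h2.cauchySeq
    rw [Metric.cauchySeq_iff] at hc2 ⊢
    intro ε hε
    obtain ⟨nn, hnn⟩ := hc2 ε hε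
    exact ⟨nn, fun m hm n hn => by rw [hdist]; exact hnn m hm n hn⟩
  obtain ⟨w, hw⟩ := cauchySeq_tendsto_of_complete hcz
  -- the pair sequence lives in the graph of U and converges
  have hpair : Filter.Tendsto (fun n => (d n, z n)) Filter.atTop (nhds ((x : X), w)) :=
    h1.prodMk_nhds hw
  have hmem : ((x : X), w) ∈ U.graph := by
    refine hU.mem_of_tendsto hpair (Filter.Eventually.of_forall fun n => ?_)
    exact U.mem_graph ⟨d n, hDU (hd n)⟩
  obtain ⟨yu, hyu1, hyu2⟩ := U.mem_graph_iff.mp hmem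
  have hyu1' : (yu : X) = (x : X) := hyu1
  have hxU : (x : X) ∈ U.domain := hyu1' ▸ yu.2
  refine ⟨hxU, ?_⟩
  have hUx : U ⟨x, hxU⟩ = w := by
    have : (⟨x, hxU⟩ : U.domain) = yu := Subtype.ext hyu1'.symm
    rw [this, hyu2]
  -- norms converge
  have hnz : Filter.Tendsto (fun n => ‖z n‖) Filter.atTop (nhds ‖w‖) := hw.norm
  have hnz' : Filter.Tendsto (fun n => ‖z n‖) Filter.atTop (nhds ‖T x‖) := by
    have : (fun n => ‖z n‖) = fun n => ‖(u n).2‖ := by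
      funext n
      rw [hud n, ← hnorm _ (hd n)]
    rw [this]
    exact h2.norm
  rw [hUx, tendsto_nhds_unique hnz hnz']

end A3

section A4



variable {X : Type*} [NormedAddCommGroup X] [InnerProductSpace ℂ X] [CompleteSpace X]

/-- A self-adjoint `LinearPMap` is closed. -/
lemma selfAdjoint_isClosed (R : X →ₗ.[ℂ] X) (hRsa : R.adjoint = R) : R.IsClosed := by
  have hRdense : Dense (R.domain : Set X) :=
    (LinearPMap.isSelfAdjoint_def.mpr hRsa : IsSelfAdjoint R).dense_domain
  have h1 : (R.adjoint).IsFormalAdjoint R := adjoint_isFormalAdjoint hRdense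
  rw [hRsa] at h1
  have hset : (R.graph : Set (X × X)) =
      ⋂ x : R.domain, {p : X × X | ⟪p.2, (x : X)⟫ = ⟪p.1, R x⟫} := by
    ext p
    simp only [Set.mem_iInter, Set.mem_setOf_eq, SetLike.mem_coe]
    constructor
    · rintro hp x
      obtain ⟨v, hv1, hv2⟩ := R.mem_graph_iff.mp hp
      rw [← hv1, ← hv2]
      exact h1 v x
    · intro hp
      have hmem : p.1 ∈ R.adjoint.domain :=
        mem_adjoint_domain_of_exists p.1 ⟨p.2, fun x => hp x⟩
      have hval : R.adjoint ⟨p.1, hmem⟩ = p.2 :=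
        adjoint_apply_eq hRdense _ (fun x => hp x)
      have : (p.1, p.2) ∈ R.adjoint.graph := by
        rw [LinearPMap.mem_graph_iff]
        exact ⟨⟨p.1, hmem⟩, rfl, hval⟩
      rw [hRsa] at this
      simpa using this
  rw [LinearPMap.IsClosed, hset]
  refine isClosed_iInter fun x => isClosed_eq ?_ ?_
  · exact Continuous.inner continuous_snd continuous_const
  · exact Continuous.inner continuous_fst continuous_const

end A4


/-- Let `A : X ⊇ dom A → Y` be closed and densely defined between complex
Hilbert spaces, and let `S = A*A` (characterized via its graph: `S x = A† (A x)` with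
`dom S = { x ∈ dom A | A x ∈ dom A† }`) be the associated self-adjoint positive operator.
If `R` is the (unique) positive self-adjoint square root of `S` (i.e. `R` is self-adjoint,
positive, and `R ∘ R = S`, again characterized via graphs), then `dom R = dom A` and
`‖R x‖ = ‖A x‖` for every `x`; that is, `|A| := (A*A)^{1/2}` and `A` are metrically
equivalent. -/
theorem sqrt_adjoint_comp_metrically_equivalent
    {X Y : Type*} [NormedAddCommGroup X] [InnerProductSpace ℂ X] [CompleteSpace X]
    [NormedAddCommGroup Y] [InnerProductSpace ℂ Y] [CompleteSpace Y]
    (A : X →ₗ.[ℂ] Y) (hclosed : A.IsClosed) (hdense : Dense (A.domain : Set X))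
    -- `S = A*A`:
    (S : X →ₗ.[ℂ] X)
    (hS : ∀ (x w : X), (x, w) ∈ S.graph ↔
      ∃ (hx : x ∈ A.domain) (hAx : A ⟨x, hx⟩ ∈ A.adjoint.domain),
        A.adjoint ⟨A ⟨x, hx⟩, hAx⟩ = w)
    (hSsa : S.adjoint = S)
    (hSpos : ∀ x : S.domain, 0 ≤ (inner ℂ (S x) (x : X) : ℂ).re)
    -- `R = S^{1/2}`, the positive self-adjoint square root of `S`:
    (R : X →ₗ.[ℂ] X) (hRsa : R.adjoint = R)
    (hRpos : ∀ x : R.domain, 0 ≤ (inner ℂ (R x) (x : X) : ℂ).re)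
    (hRsq : ∀ (x w : X), (x, w) ∈ S.graph ↔
      ∃ (hx : x ∈ R.domain) (hRx : R ⟨x, hx⟩ ∈ R.domain), R ⟨R ⟨x, hx⟩, hRx⟩ = w) :
    R.domain = A.domain ∧
      ∀ (x : X) (hxR : x ∈ R.domain) (hxA : x ∈ A.domain),
        ‖R ⟨x, hxR⟩‖ = ‖A ⟨x, hxA⟩‖ := by
  have hRdense : Dense (R.domain : Set X) :=
    (LinearPMap.isSelfAdjoint_def.mpr hRsa : IsSelfAdjoint R).dense_domain
  have hRclosed : R.IsClosed := selfAdjoint_isClosed R hRsa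
  have hsymm : R.IsFormalAdjoint R := by
    have h : (R.adjoint).IsFormalAdjoint R := adjoint_isFormalAdjoint hRdense
    rwa [hRsa] at h
  have hAfa : (A.adjoint).IsFormalAdjoint A := adjoint_isFormalAdjoint hdense
  -- facts about elements of `dom S`
  have hSA : S.domain ≤ A.domain := by
    intro y hy
    obtain ⟨hx, -, -⟩ := (hS y (S ⟨y, hy⟩)).mp (S.mem_graph ⟨y, hy⟩)
    exact hx
  have hSR : S.domain ≤ R.domain := by
    intro y hy
    obtain ⟨hx, -, -⟩ := (hRsq y (S ⟨y, hy⟩)).mp (S.mem_graph ⟨y, hy⟩)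
    exact hx
  -- the norm identity on `dom S`
  have normD : ∀ (y : X) (hy : y ∈ S.domain), ‖R ⟨y, hSR hy⟩‖ = ‖A ⟨y, hSA hy⟩‖ := by
    intro y hy
    set w := S ⟨y, hy⟩ with hw
    obtain ⟨hA, hAd, heqA⟩ := (hS y w).mp (S.mem_graph ⟨y, hy⟩)
    obtain ⟨hR, hRR, heqR⟩ := (hRsq y w).mp (S.mem_graph ⟨y, hy⟩)
    have e1 : ⟪A ⟨y, hA⟩, A ⟨y, hA⟩⟫ = ⟪w, y⟫ := by
      have := hAfa ⟨A ⟨y, hA⟩, hAd⟩ ⟨y, hA⟩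
      rw [heqA] at this
      exact this.symm
    have e2 : ⟪R ⟨y, hR⟩, R ⟨y, hR⟩⟫ = ⟪w, y⟫ := by
      have := hsymm ⟨R ⟨y, hR⟩, hRR⟩ ⟨y, hR⟩
      rw [heqR] at this
      exact this.symm
    have e4 : ‖R ⟨y, hR⟩‖ ^ 2 = ‖A ⟨y, hA⟩‖ ^ 2 := by
      rw [← @inner_self_eq_norm_sq ℂ, ← @inner_self_eq_norm_sq ℂ, e1, e2]
    have e5 : ‖R ⟨y, hR⟩‖ = ‖A ⟨y, hA⟩‖ := by
      have := congrArg Real.sqrt e4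
      rwa [Real.sqrt_sq (norm_nonneg _), Real.sqrt_sq (norm_nonneg _)] at this
    exact e5
  -- the two common-core submodules
  set NA : Submodule ℂ (X × Y) := A.graph ⊓ (S.domain.prod ⊤) with hNAdef
  set NR : Submodule ℂ (X × X) := R.graph ⊓ (S.domain.prod ⊤) with hNRdef
  have hNAmem : ∀ q : X × Y, q ∈ NA ↔ q ∈ A.graph ∧ q.1 ∈ S.domain := by
    intro q
    rw [hNAdef, Submodule.mem_inf, Submodule.mem_prod]
    simp
  have hNRmem : ∀ q : X × X, q ∈ NR ↔ q ∈ R.graph ∧ q.1 ∈ S.domain := by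
    intro q
    rw [hNRdef, Submodule.mem_inf, Submodule.mem_prod]
    simp
  -- kernel conditions for the core lemma
  have hkerA : ∀ p ∈ A.graph, (∀ q ∈ NA, ⟪q.1, p.1⟫ + ⟪q.2, p.2⟫ = 0) → p = (0 : X × Y) := by
    intro p hp hortho
    obtain ⟨px, hpx1, hpx2⟩ := A.mem_graph_iff.mp hp
    have hz : ∀ z : X, ⟪z, p.1⟫ = 0 := by
      intro z
      obtain ⟨x', hx', hAx', hzeq⟩ := vonNeumann_surj A hclosed hdense z
      set w := A.adjoint ⟨A ⟨x', hx'⟩, hAx'⟩ with hwdef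
      have hgr : (x', w) ∈ S.graph := (hS x' w).mpr ⟨hx', hAx', rfl⟩
      have hx'S : x' ∈ S.domain := LinearPMap.mem_domain_iff.mpr ⟨w, hgr⟩
      have hqN : (x', A ⟨x', hx'⟩) ∈ NA :=
        (hNAmem _).mpr ⟨A.mem_graph ⟨x', hx'⟩, hx'S⟩
      have h0 := hortho _ hqN
      have h1 : ⟪w, p.1⟫ = ⟪A ⟨x', hx'⟩, p.2⟫ := by
        have := hAfa ⟨A ⟨x', hx'⟩, hAx'⟩ px
        rwa [hpx1, hpx2] at this
      calc ⟪z, p.1⟫ = ⟪x' + w, p.1⟫ := by rw [hzeq]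
        _ = ⟪x', p.1⟫ + ⟪w, p.1⟫ := inner_add_left _ _ _
        _ = ⟪x', p.1⟫ + ⟪A ⟨x', hx'⟩, p.2⟫ := by rw [h1]
        _ = 0 := h0
    have hp1 : p.1 = 0 := by
      have := hz p.1
      rwa [inner_self_eq_zero] at this
    have hpx0 : px = (0 : A.domain) := Subtype.ext (by rw [hpx1, hp1]; rfl)
    have hp2 : p.2 = 0 := by rw [← hpx2, hpx0, LinearPMap.map_zero]
    exact Prod.ext_iff.mpr ⟨hp1, hp2⟩
  have hkerR : ∀ p ∈ R.graph, (∀ q ∈ NR, ⟪q.1, p.1⟫ + ⟪q.2, p.2⟫ = 0) → p = (0 : X × X) := by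
    intro p hp hortho
    obtain ⟨px, hpx1, hpx2⟩ := R.mem_graph_iff.mp hp
    have hz : ∀ z : X, ⟪z, p.1⟫ = 0 := by
      intro z
      obtain ⟨x', hx', hAx', hzeq⟩ := vonNeumann_surj A hclosed hdense z
      set w := A.adjoint ⟨A ⟨x', hx'⟩, hAx'⟩ with hwdef
      have hgr : (x', w) ∈ S.graph := (hS x' w).mpr ⟨hx', hAx', rfl⟩
      have hx'S : x' ∈ S.domain := LinearPMap.mem_domain_iff.mpr ⟨w, hgr⟩
      obtain ⟨hx'R, hRx', hReq⟩ := (hRsq x' w).mp hgr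
      have hqN : (x', R ⟨x', hx'R⟩) ∈ NR :=
        (hNRmem _).mpr ⟨R.mem_graph ⟨x', hx'R⟩, hx'S⟩
      have h0 := hortho _ hqN
      have h1 : ⟪w, p.1⟫ = ⟪R ⟨x', hx'R⟩, p.2⟫ := by
        have := hsymm ⟨R ⟨x', hx'R⟩, hRx'⟩ px
        rwa [hReq, hpx1, hpx2] at this
      calc ⟪z, p.1⟫ = ⟪x' + w, p.1⟫ := by rw [hzeq]
        _ = ⟪x', p.1⟫ + ⟪w, p.1⟫ := inner_add_left _ _ _
        _ = ⟪x', p.1⟫ + ⟪R ⟨x', hx'R⟩, p.2⟫ := by rw [h1]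
        _ = 0 := h0
    have hp1 : p.1 = 0 := by
      have := hz p.1
      rwa [inner_self_eq_zero] at this
    have hpx0 : px = (0 : R.domain) := Subtype.ext (by rw [hpx1, hp1]; rfl)
    have hp2 : p.2 = 0 := by rw [← hpx2, hpx0, LinearPMap.map_zero]
    exact Prod.ext_iff.mpr ⟨hp1, hp2⟩
  -- the cores
  have coreA := graph_core A hclosed NA inf_le_left hkerA
  have coreR := graph_core R hRclosed NR inf_le_left hkerR
  -- membership descriptions for `transfer`
  have hNAspec : ∀ q ∈ NA, ∃ hd : q.1 ∈ S.domain, q.2 = A ⟨q.1, hSA hd⟩ := by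
    intro q hq
    obtain ⟨hg, hd⟩ := (hNAmem q).mp hq
    obtain ⟨v, hv1, hv2⟩ := A.mem_graph_iff.mp hg
    exact ⟨hd, by rw [← hv2]; congr 1; exact Subtype.ext hv1⟩
  have hNRspec : ∀ q ∈ NR, ∃ hd : q.1 ∈ S.domain, q.2 = R ⟨q.1, hSR hd⟩ := by
    intro q hq
    obtain ⟨hg, hd⟩ := (hNRmem q).mp hq
    obtain ⟨v, hv1, hv2⟩ := R.mem_graph_iff.mp hg
    exact ⟨hd, by rw [← hv2]; congr 1; exact Subtype.ext hv1⟩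
  -- the two transfer directions
  have dir1 : ∀ x : R.domain, ∃ hxA : (x : X) ∈ A.domain, ‖A ⟨x, hxA⟩‖ = ‖R x‖ := by
    intro x
    exact transfer R A hclosed S.domain hSR hSA normD NR hNRspec x
      (coreR _ (R.mem_graph x))
  have dir2 : ∀ x : A.domain, ∃ hxR : (x : X) ∈ R.domain, ‖R ⟨x, hxR⟩‖ = ‖A x‖ := by
    intro x
    exact transfer A R hRclosed S.domain hSA hSR (fun y hy => (normD y hy).symm)
      NA hNAspec x (coreA _ (A.mem_graph x))
  constructor
  · apply le_antisymm
    · exact fun x hx => (dir1 ⟨x, hx⟩).1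
    · exact fun x hx => (dir2 ⟨x, hx⟩).1
  · intro x hxR hxA
    obtain ⟨hxA', heq⟩ := dir1 ⟨x, hxR⟩
    exact heq.symm
end

section
/- With notation as above, the operator F𝓗 on Z_h = X_h × X given by (z₁,z₂) ↦ (z₂, S z₁) with domain { (z₁,z₂) ∈ X_h × X_h : S z₁ ∈ X } is self-adjoint on Z_h and boundedly invertible, with inverse (x,y) ↦ (S^{-1} y, x). -/
open LinearPMap

private lemma withLp_prod_ext {E F : Type*} {a b : WithLp 2 (E × F)}
    (h1 : a.ofLp.1 = b.ofLp.1) (h2 : a.ofLp.2 = b.ofLp.2) : a = b :=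
    congrArg (WithLp.toLp 2) (Prod.ext h1 h2)

/-- In the setting of the abstract second-order system (`X` a complex
Hilbert space, `Xh` the energy space `X_h = dom S^{1/2}` embedded in `X` via a continuous
injective dense embedding `ι`), the operator `F𝓗 : (z₁,z₂) ↦ (z₂, S z₁)` on
`Z_h = X_h × X` with domain `{ (z₁,z₂) ∈ X_h × X_h | S z₁ ∈ X }` — whose graph in terms of
`ι` is `{ ((z₁,z₂),(w₁,w₂)) | ι w₁ = z₂ ∧ ∀ y, ⟨z₁,y⟩_{X_h} = ⟨w₂, ι y⟩_X }` — is
self-adjoint on `Z_h` and boundedly invertible, with (everywhere defined, bounded) inverse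
`(x,y) ↦ (S⁻¹ y, x)`, where `S⁻¹ = ι* : X → X_h` (the bounded inverse of the Riesz map). -/
theorem secondOrder_FH_selfAdjoint_boundedly_invertible
    {X Xh : Type*} [NormedAddCommGroup X] [InnerProductSpace ℂ X] [CompleteSpace X]
    [NormedAddCommGroup Xh] [InnerProductSpace ℂ Xh] [CompleteSpace Xh]
    (ι : Xh →L[ℂ] X) (hinj : Function.Injective ι) (hdense : DenseRange ι)
    (T : WithLp 2 (Xh × X) →ₗ.[ℂ] WithLp 2 (Xh × X))
    (hT : ∀ z w : WithLp 2 (Xh × X), (z, w) ∈ T.graph ↔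
      (ι w.ofLp.1 = z.ofLp.2 ∧ ∀ y : Xh, (inner ℂ z.ofLp.1 y : ℂ) = inner ℂ w.ofLp.2 (ι y))) :
    T.adjoint = T ∧
      ∀ z w : WithLp 2 (Xh × X), (z, w) ∈ T.graph ↔
        (z.ofLp.1 = ContinuousLinearMap.adjoint ι w.ofLp.2 ∧ z.ofLp.2 = ι w.ofLp.1) := by
  -- `ι†` is injective since `ι` has dense range.
  have hadj_inj : ∀ y : X, ContinuousLinearMap.adjoint ι y = 0 → y = 0 := by
    intro y hy
    have hfun : (fun v : X => (inner ℂ y v : ℂ)) = fun _ => (0 : ℂ) := by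
      refine Continuous.ext_on hdense (innerSL ℂ y).continuous continuous_const ?_
      rintro _ ⟨x, rfl⟩
      show (inner ℂ y (ι x) : ℂ) = 0
      rw [← ContinuousLinearMap.adjoint_inner_left, hy, inner_zero_left]
    have : (inner ℂ y y : ℂ) = 0 := congrFun hfun y
    exact inner_self_eq_zero.1 this
  -- the clean graph characterization
  have key : ∀ z w : WithLp 2 (Xh × X), (z, w) ∈ T.graph ↔
      (z.ofLp.1 = ContinuousLinearMap.adjoint ι w.ofLp.2 ∧ z.ofLp.2 = ι w.ofLp.1) := by
    intro z w
    rw [hT]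
    constructor
    · rintro ⟨h1, h2⟩
      refine ⟨ext_inner_right ℂ fun y => ?_, h1.symm⟩
      rw [h2 y, ContinuousLinearMap.adjoint_inner_left]
    · rintro ⟨h1, h2⟩
      exact ⟨h2.symm, fun y => by rw [h1, ContinuousLinearMap.adjoint_inner_left]⟩
  refine ⟨?_, key⟩
  -- the bounded "inverse" map
  set B : WithLp 2 (Xh × X) → WithLp 2 (Xh × X) :=
    fun w => (WithLp.equiv 2 (Xh × X)).symm (ContinuousLinearMap.adjoint ι w.ofLp.2, ι w.ofLp.1) with hB
  have hB1 : ∀ w, (B w).ofLp.1 = ContinuousLinearMap.adjoint ι w.ofLp.2 := fun w => rfl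
  have hB2 : ∀ w, (B w).ofLp.2 = ι w.ofLp.1 := fun w => rfl
  -- `B` is formally self-adjoint
  have hBadj : ∀ u v : WithLp 2 (Xh × X), (inner ℂ (B u) v : ℂ) = inner ℂ u (B v) := by
    intro u v
    rw [WithLp.prod_inner_apply, WithLp.prod_inner_apply]
    show (inner ℂ (ContinuousLinearMap.adjoint ι u.ofLp.2) v.ofLp.1 : ℂ) + inner ℂ (ι u.ofLp.1) v.ofLp.2 =
      inner ℂ u.ofLp.1 (ContinuousLinearMap.adjoint ι v.ofLp.2) + inner ℂ u.ofLp.2 (ι v.ofLp.1)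
    rw [ContinuousLinearMap.adjoint_inner_left, ContinuousLinearMap.adjoint_inner_right]
    ring
  -- `(B w, w)` is in the graph for every `w`
  have hBmem : ∀ w, (B w, w) ∈ T.graph := fun w => (key _ _).2 ⟨hB1 w, hB2 w⟩
  -- every graph element has this form
  have hgraph : ∀ z w : WithLp 2 (Xh × X), (z, w) ∈ T.graph → z = B w := by
    intro z w h
    obtain ⟨h1, h2⟩ := (key z w).1 h
    exact withLp_prod_ext (h1.trans (hB1 w).symm) (h2.trans (hB2 w).symm)
  -- the domain of `T` is dense
  have hd : Dense (T.domain : Set (WithLp 2 (Xh × X))) := by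
    rw [Submodule.dense_iff_topologicalClosure_eq_top,
      Submodule.topologicalClosure_eq_top_iff]
    rw [Submodule.eq_bot_iff]
    intro v hv
    have hBv : B v = 0 := by
      refine ext_inner_left ℂ fun w => ?_
      rw [inner_zero_right, ← hBadj]
      have hmem : B w ∈ T.domain := by
        rcases T.mem_graph_iff.1 (hBmem w) with ⟨y, hy, -⟩
        have hy' : (↑y : WithLp 2 (Xh × X)) = B w := hy
        rw [← hy']; exact y.2
      exact hv (B w) hmem
    have h1 : ContinuousLinearMap.adjoint ι v.ofLp.2 = 0 := by
      rw [← hB1 v, hBv]; rfl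
    have h2 : ι v.ofLp.1 = 0 := by rw [← hB2 v, hBv]; rfl
    have hv1 : v.ofLp.1 = 0 := hinj (by rw [h2]; exact (_root_.map_zero ι).symm)
    have hv2 : v.ofLp.2 = 0 := hadj_inj _ h1
    exact withLp_prod_ext hv1 hv2
  -- `T` is symmetric
  have hsymm : T.IsFormalAdjoint T := by
    intro x y
    have hx : (↑x : WithLp 2 (Xh × X)) = B (T x) := hgraph _ _ (T.mem_graph x)
    have hy : (↑y : WithLp 2 (Xh × X)) = B (T y) := hgraph _ _ (T.mem_graph y)
    rw [hx, hy, ← hBadj]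
  -- `T† ≤ T`
  have hle : T.adjoint ≤ T := by
    apply LinearPMap.le_of_le_graph
    intro p hp
    rcases T.adjoint.mem_graph_iff.1 hp with ⟨y, hy1, hy2⟩
    have hform := LinearPMap.adjoint_isFormalAdjoint hd
    have hyx : p.1 = B p.2 := by
      refine ext_inner_right ℂ fun w => ?_
      have hmemw : B w ∈ T.domain := by
        rcases T.mem_graph_iff.1 (hBmem w) with ⟨u, hu, -⟩
        have hu' : (↑u : WithLp 2 (Xh × X)) = B w := hu
        rw [← hu']; exact u.2
      have hTval : T ⟨B w, hmemw⟩ = w := by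
        rcases T.mem_graph_iff.1 (hBmem w) with ⟨u, hu, hu2⟩
        have : (⟨B w, hmemw⟩ : T.domain) = u := Subtype.ext hu.symm
        rw [this, hu2]
      have := hform y ⟨B w, hmemw⟩
      rw [hy2, hTval, hy1] at this
      have this' : (inner ℂ p.2 (B w) : ℂ) = inner ℂ p.1 w := this
      rw [hBadj]
      exact this'.symm
    have : p = (B p.2, p.2) := Prod.ext hyx rfl
    rw [this]
    exact hBmem p.2
  exact le_antisymm hle (hsymm.le_adjoint hd)
end

section
/- Let A : X ⊇ dom A → Y and B : Y ⊇ dom B → X be closed densely defined operators between Hilbert spaces with A* ⊆ −B (i.e. (A*,−B*) is a dual pair), and assume A is bounded below so ran A is closed. Define 𝒜 on Z_h = X_h × X by dom 𝒜 = { (z₁,z₂) ∈ X_h × X_h : A z₁ ∈ dom B } and 𝒜(z₁,z₂) = (z₂, B A z₁), where X_h = dom A with norm ‖A·‖. Then 𝒜 is a closed operator. -/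
open LinearPMap Filter

/-- Let `A : X ⊇ dom A → Y` be closed, densely defined and bounded below by
`c > 0`, and `B : Y ⊇ dom B → X` closed and densely defined with `A* ⊆ −B` (dual pair).
On `Z_h = X_h × X`, where `X_h = dom A` carries the energy norm `‖A ·‖_Y`, define
`𝒜(z₁,z₂) = (z₂, B A z₁)` with `dom 𝒜 = { (z₁,z₂) ∈ X_h × X_h | A z₁ ∈ dom B }`.
Then `𝒜` is a closed operator: whenever `(uₙ, vₙ) ∈ dom 𝒜`, `(uₙ, vₙ) → (uL, vL)` in
`Z_h` (i.e. `A uₙ → A uL` in `Y` and `vₙ → vL` in `X`) and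
`𝒜(uₙ,vₙ) = (vₙ, B A uₙ) → (w₁, w₂)` in `Z_h` (i.e. `A vₙ → A w₁` in `Y` and
`B A uₙ → w₂` in `X`), the limit `(uL, vL)` belongs to `dom 𝒜` and `𝒜(uL,vL) = (w₁,w₂)`. -/
theorem secondOrder_extension_isClosed
    {X Y : Type*} [NormedAddCommGroup X] [InnerProductSpace ℂ X] [CompleteSpace X]
    [NormedAddCommGroup Y] [InnerProductSpace ℂ Y] [CompleteSpace Y]
    (A : X →ₗ.[ℂ] Y) (hAclosed : A.IsClosed) (hAdense : Dense (A.domain : Set X))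
    (c : ℝ) (hc : 0 < c) (hbound : ∀ x : A.domain, c * ‖(x : X)‖ ≤ ‖A x‖)
    (B : Y →ₗ.[ℂ] X) (hBclosed : B.IsClosed) (hBdense : Dense (B.domain : Set Y))
    (hdual : A.adjoint ≤ -B)
    (u v : ℕ → A.domain) (hu : ∀ n, (A (u n) : Y) ∈ B.domain)
    (uL : A.domain) (huL : Tendsto (fun n => A (u n)) atTop (nhds (A uL)))
    (vL : X) (hvL : Tendsto (fun n => ((v n : X))) atTop (nhds vL))
    (w₁ : A.domain) (hw₁ : Tendsto (fun n => A (v n)) atTop (nhds (A w₁)))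
    (w₂ : X) (hw₂ : Tendsto (fun n => B ⟨A (u n), hu n⟩) atTop (nhds w₂)) :
    ∃ hL : (A uL : Y) ∈ B.domain, vL = (w₁ : X) ∧ B ⟨A uL, hL⟩ = w₂ := by
  -- Step 1: closedness of B gives `A uL ∈ dom B` and `B (A uL) = w₂`.
  have hmem : (((A uL : Y), w₂) ∈ (B.graph : Set (Y × X))) := by
    have hseq : ∀ n, ((A (u n) : Y), B ⟨A (u n), hu n⟩) ∈ (B.graph : Set (Y × X)) :=
      fun n => B.mem_graph ⟨A (u n), hu n⟩
    exact hBclosed.mem_of_tendsto (huL.prodMk_nhds hw₂) (Filter.Eventually.of_forall hseq)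
  rw [SetLike.mem_coe, B.mem_graph_iff] at hmem
  obtain ⟨y, hy1, hy2⟩ := hmem
  have hL : (A uL : Y) ∈ B.domain := by have := y.2; rwa [hy1] at this
  refine ⟨hL, ?_, ?_⟩
  · -- Step 2: `vₙ → w₁` in X by the bound, and `vₙ → vL`, so `vL = w₁`.
    have hvw : Tendsto (fun n => ((v n : X))) atTop (nhds (w₁ : X)) := by
      rw [tendsto_iff_norm_sub_tendsto_zero]
      have hAnorm : Tendsto (fun n => ‖A (v n) - A w₁‖) atTop (nhds 0) := by
        simpa using (tendsto_iff_norm_sub_tendsto_zero.mp hw₁)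
      have h0 : Tendsto (fun n => (1 / c) * ‖A (v n) - A w₁‖) atTop (nhds 0) := by
        simpa using hAnorm.const_mul (1 / c)
      refine squeeze_zero (fun n => norm_nonneg _) (fun n => ?_) h0
      have : c * ‖((v n : X)) - (w₁ : X)‖ ≤ ‖A (v n) - A w₁‖ := by
        simpa [LinearPMap.map_sub, AddSubgroupClass.coe_sub] using hbound (v n - w₁)
      calc ‖((v n : X)) - (w₁ : X)‖ = (1 / c) * (c * ‖((v n : X)) - (w₁ : X)‖) := by
            field_simp
        _ ≤ (1 / c) * ‖A (v n) - A w₁‖ := by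
            exact mul_le_mul_of_nonneg_left this (by positivity)
    exact tendsto_nhds_unique hvL hvw
  · -- Step 3: `B (A uL) = w₂`.
    have : y = ⟨A uL, hL⟩ := Subtype.ext hy1
    rw [this] at hy2
    exact hy2
end

section
/- In the setting above, the operator 𝒜 defined by dom 𝒜 = { (z₁,z₂) ∈ X_h × X_h : A z₁ ∈ dom B }, 𝒜(z₁,z₂) = (z₂, BA z₁), extends the skew-adjoint operator A_s associated to S = A*A; in particular, for (z₁,z₂) ∈ dom A_s one has A z₁ ∈ dom A* and B A z₁ = −A*A z₁. Consequently 𝒜 is densely defined and 𝒜* ⊆ −𝒜 (i.e. 𝒜* is skew-symmetric). -/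
open LinearPMap Filter

section Aux

variable {X Y : Type*} [NormedAddCommGroup X] [InnerProductSpace ℂ X] [CompleteSpace X]
  [NormedAddCommGroup Y] [InnerProductSpace ℂ Y] [CompleteSpace Y]

local notation "⟪" x ", " y "⟫" => @inner ℂ _ _ x y

/-- If `⟪w, x⟫ = ⟪y, A x⟫` for all `x` in the (dense) domain, then `y` belongs to the
adjoint domain and the adjoint value is `w`. -/
lemma skewaux_mem_adj (A : X →ₗ.[ℂ] Y) (hAdense : Dense (A.domain : Set X)) (y : Y) (w : X)
    (h : ∀ x : A.domain, ⟪w, (x : X)⟫ = ⟪y, A x⟫) :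
    ∃ hy : y ∈ A.adjoint.domain, A.adjoint ⟨y, hy⟩ = w := by
  have hy : y ∈ A.adjoint.domain := mem_adjoint_domain_of_exists y ⟨w, h⟩
  exact ⟨hy, adjoint_apply_eq hAdense ⟨y, hy⟩ h⟩

/-- From `A† ≤ -B`: domain transfer and value relation. -/
lemma skewaux_B_of_adj {A : X →ₗ.[ℂ] Y} {B : Y →ₗ.[ℂ] X} (hdual : A.adjoint ≤ -B)
    (y : Y) (h : y ∈ A.adjoint.domain) :
    ∃ hB : y ∈ B.domain, B ⟨y, hB⟩ = -(A.adjoint ⟨y, h⟩) := by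
  obtain ⟨yB, hcoe, happ⟩ := exists_of_le hdual ⟨y, h⟩
  have hcoe' : y = (yB : Y) := hcoe
  have hB : y ∈ B.domain := by rw [hcoe']; exact yB.2
  have hyB : yB = (⟨y, hB⟩ : B.domain) := Subtype.ext hcoe'.symm
  have : A.adjoint ⟨y, h⟩ = -(B yB) := by rw [happ]; exact LinearPMap.neg_apply B yB
  rw [hyB] at this
  rw [this, neg_neg]
  exact ⟨hB, rfl⟩

theorem WithLp.equiv_symm_fst {p : ENNReal} (x : X × Y) :
    ((WithLp.equiv p (X × Y)).symm x).fst = x.fst := rfl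

theorem WithLp.equiv_symm_snd {p : ENNReal} (x : X × Y) :
    ((WithLp.equiv p (X × Y)).symm x).snd = x.snd := rfl

/-- The graph of `A` as a submodule of `WithLp 2 (X × Y)`. -/
noncomputable def skewauxG (A : X →ₗ.[ℂ] Y) : Submodule ℂ (WithLp 2 (X × Y)) :=
  A.graph.comap (WithLp.linearEquiv 2 ℂ (X × Y)).toLinearMap

lemma skewaux_mem_G {A : X →ₗ.[ℂ] Y} {g : WithLp 2 (X × Y)} :
    g ∈ skewauxG A ↔ ∃ u : A.domain, (u : X) = g.fst ∧ A u = g.snd := by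
  rw [skewauxG, Submodule.mem_comap]
  exact A.mem_graph_iff

lemma skewaux_G_closed (A : X →ₗ.[ℂ] Y) (hAclosed : A.IsClosed) :
    IsClosed ((skewauxG A : Set (WithLp 2 (X × Y)))) := by
  have : (skewauxG A : Set (WithLp 2 (X × Y)))
      = (WithLp.equiv 2 (X × Y)) ⁻¹' (A.graph : Set (X × Y)) := rfl
  rw [this]
  exact hAclosed.preimage (WithLp.prod_continuous_ofLp 2 X Y)

lemma skewaux_snd_norm_le (g : WithLp 2 (X × Y)) : ‖g.snd‖ ≤ ‖g‖ := by
  have h := WithLp.prod_norm_sq_eq_of_L2 g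
  nlinarith [norm_nonneg g, norm_nonneg g.fst, norm_nonneg g.snd]

/-- von Neumann: `1 + A†A` is surjective. -/
lemma skewaux_vonNeumann (A : X →ₗ.[ℂ] Y) (hAclosed : A.IsClosed)
    (hAdense : Dense (A.domain : Set X)) (x : X) :
    ∃ (u : A.domain) (h : (A u : Y) ∈ A.adjoint.domain),
      (u : X) + A.adjoint ⟨A u, h⟩ = x := by
  haveI : CompleteSpace (skewauxG A) :=
    (skewaux_G_closed A hAclosed).completeSpace_coe
  obtain ⟨m, hm, w, hw, hdecomp⟩ := (skewauxG A).exists_add_mem_mem_orthogonal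
      ((WithLp.equiv 2 (X × Y)).symm (x, 0))
  obtain ⟨u, hu1, hu2⟩ := skewaux_mem_G.mp hm
  -- identify components of w
  have hwfst : w.fst = x - (u : X) := by
    have : w = (WithLp.equiv 2 (X × Y)).symm (x, 0) - m := by rw [hdecomp]; abel
    rw [this, WithLp.sub_fst, WithLp.equiv_symm_fst, hu1]
  have hwsnd : w.snd = -(A u) := by
    have : w = (WithLp.equiv 2 (X × Y)).symm (x, 0) - m := by rw [hdecomp]; abel
    rw [this, WithLp.sub_snd, WithLp.equiv_symm_snd, hu2]
    simp
  -- orthogonality against graph elements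
  have key : ∀ p : A.domain, ⟪x - (u : X), (p : X)⟫ = ⟪(A u : Y), A p⟫ := by
    intro p
    have hgp : ((WithLp.equiv 2 (X × Y)).symm ((p : X), A p)) ∈ skewauxG A := by
      rw [skewaux_mem_G]
      exact ⟨p, by rw [WithLp.equiv_symm_fst], by rw [WithLp.equiv_symm_snd]⟩
    have h0 := (Submodule.mem_orthogonal _ w).mp hw _ hgp
    rw [WithLp.prod_inner_apply] at h0
    change ⟪(p : X), w.fst⟫ + ⟪A p, w.snd⟫ = 0 at h0
    rw [hwfst, hwsnd, inner_neg_right] at h0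
    have h1 : ⟪(p : X), x - (u : X)⟫ = ⟪A p, (A u : Y)⟫ := by
      rw [← sub_eq_zero]; rw [← sub_eq_add_neg] at h0; exact h0
    calc ⟪x - (u : X), (p : X)⟫ = starRingEnd ℂ ⟪(p : X), x - (u : X)⟫ := by
          rw [inner_conj_symm]
      _ = starRingEnd ℂ ⟪A p, (A u : Y)⟫ := by rw [h1]
      _ = ⟪(A u : Y), A p⟫ := by rw [inner_conj_symm]
  obtain ⟨h, hval⟩ := skewaux_mem_adj A hAdense (A u) (x - (u : X)) key
  exact ⟨u, h, by rw [hval]; abel⟩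

/-- Density of the second-order domain in the graph norm. -/
lemma skewaux_core (A : X →ₗ.[ℂ] Y) (hAclosed : A.IsClosed)
    (hAdense : Dense (A.domain : Set X)) (z₁ : A.domain) (ε : ℝ) (hε : 0 < ε) :
    ∃ u : A.domain, ((A u : Y) ∈ A.adjoint.domain) ∧ ‖A z₁ - A u‖ < ε := by
  classical
  set f : WithLp 2 (X × Y) →ₗ[ℂ] Y :=
    (LinearMap.snd ℂ X Y).comp (WithLp.linearEquiv 2 ℂ (X × Y)).toLinearMap with hf
  set M : Submodule ℂ (WithLp 2 (X × Y)) :=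
    skewauxG A ⊓ (A.adjoint.domain.comap f) with hM
  set N := M.topologicalClosure with hN
  haveI : CompleteSpace N :=
    M.isClosed_topologicalClosure.completeSpace_coe
  set g : WithLp 2 (X × Y) := (WithLp.equiv 2 (X × Y)).symm ((z₁ : X), A z₁) with hg
  have hgG : g ∈ skewauxG A := by
    rw [skewaux_mem_G]
    exact ⟨z₁, by rw [hg, WithLp.equiv_symm_fst], by rw [hg, WithLp.equiv_symm_snd]⟩
  obtain ⟨m, hm, w, hw, hdecomp⟩ := N.exists_add_mem_mem_orthogonal g
  have hNG : N ≤ skewauxG A :=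
    Submodule.topologicalClosure_minimal M inf_le_left (skewaux_G_closed A hAclosed)
  have hwG : w ∈ skewauxG A := by
    have : w = g - m := by rw [hdecomp]; abel
    rw [this]
    exact Submodule.sub_mem _ hgG (hNG hm)
  obtain ⟨v, hv1, hv2⟩ := skewaux_mem_G.mp hwG
  -- w is orthogonal to every element of M
  have horth : ∀ (u : A.domain), (A u : Y) ∈ A.adjoint.domain →
      ⟪(u : X), (v : X)⟫ + ⟪(A u : Y), (A v : Y)⟫ = 0 := by
    intro u hAu
    have hgu : ((WithLp.equiv 2 (X × Y)).symm ((u : X), A u)) ∈ M := by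
      rw [hM, Submodule.mem_inf]
      constructor
      · rw [skewaux_mem_G]
        exact ⟨u, by rw [WithLp.equiv_symm_fst], by rw [WithLp.equiv_symm_snd]⟩
      · rw [Submodule.mem_comap]
        exact hAu
    have h0 := (Submodule.mem_orthogonal N w).mp hw _ (M.le_topologicalClosure hgu)
    rw [WithLp.prod_inner_apply] at h0
    rw [hv1, hv2]
    simpa [WithLp.equiv_symm_fst, WithLp.equiv_symm_snd] using h0
  -- conclude v = 0
  have hv0 : (v : X) = 0 := by
    obtain ⟨u₀, h₀, hsum⟩ := skewaux_vonNeumann A hAclosed hAdense (v : X)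
    have hfa := (adjoint_isFormalAdjoint hAdense) ⟨A u₀, h₀⟩ v
    have h0 := horth u₀ h₀
    rw [← hfa, ← inner_add_left, hsum, inner_self_eq_zero] at h0
    exact h0
  have hw0 : w = 0 := by
    have hvz : v = (0 : A.domain) := Subtype.ext hv0
    have h2 : (WithLp.linearEquiv 2 ℂ (X × Y)) w = 0 := by
      have hfst : w.fst = 0 := by rw [← hv1, hv0]
      have hsnd : w.snd = 0 := by rw [← hv2, hvz, A.map_zero]
      exact Prod.ext hfst hsnd
    exact (LinearEquiv.map_eq_zero_iff _).mp h2
  have hgN : g ∈ N := by rw [hdecomp, hw0, add_zero]; exact hm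
  have hgc : g ∈ closure (M : Set (WithLp 2 (X × Y))) := by
    rw [← Submodule.topologicalClosure_coe]; exact hgN
  obtain ⟨b, hbM, hdist⟩ := Metric.mem_closure_iff.mp hgc ε hε
  obtain ⟨hbG, hbadj⟩ := Submodule.mem_inf.mp hbM
  obtain ⟨ub, hub1, hub2⟩ := skewaux_mem_G.mp hbG
  refine ⟨ub, ?_, ?_⟩
  · rw [hub2]; exact hbadj
  · have h3 : (A z₁ : Y) - A ub = (g - b).snd := by
      rw [WithLp.sub_snd, hub2, hg, WithLp.equiv_symm_snd]
    calc ‖(A z₁ : Y) - A ub‖ = ‖(g - b).snd‖ := by rw [h3]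
      _ ≤ ‖g - b‖ := skewaux_snd_norm_le _
      _ = dist g b := (dist_eq_norm g b).symm
      _ < ε := hdist

end Aux

/-- Setting: `A : X ⊇ dom A → Y` closed, densely defined, bounded below by
`c > 0`; `S = A*A` self-adjoint uniformly positive; `X_h = dom A` with the energy norm;
`Z_h = X_h × X`; `B : Y ⊇ dom B → X` closed densely defined with `A* ⊆ −B`; `𝒜` the operator
`𝒜(z₁,z₂) = (z₂, B A z₁)` with `dom 𝒜 = { (z₁,z₂) ∈ X_h × X_h | A z₁ ∈ dom B }`.
Then `𝒜` extends the skew-adjoint operator `A_s` associated with `S`; in particular for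
`(z₁,z₂) ∈ dom A_s` (i.e. `S z₁ ∈ X`, meaning `∃ w, ∀ y ∈ dom A, ⟨A z₁, A y⟩_Y = ⟨w, y⟩_X`)
one has `A z₁ ∈ dom A*`, `A z₁ ∈ dom B` and `B A z₁ = −A* A z₁`. Consequently `𝒜` is densely
defined in `Z_h` and `𝒜* ⊆ −𝒜`, i.e. `𝒜*` is skew-symmetric (the adjoint and density being
expressed with respect to the `Z_h`-inner product
`⟨(a,b),(c,d)⟩_{Z_h} = ⟨A a, A c⟩_Y + ⟨b, d⟩_X`). -/
theorem secondOrder_extension_extends_As_and_adjoint_skewSymmetric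
    {X Y : Type*} [NormedAddCommGroup X] [InnerProductSpace ℂ X] [CompleteSpace X]
    [NormedAddCommGroup Y] [InnerProductSpace ℂ Y] [CompleteSpace Y]
    (A : X →ₗ.[ℂ] Y) (hAclosed : A.IsClosed) (hAdense : Dense (A.domain : Set X))
    (c : ℝ) (hc : 0 < c) (hbound : ∀ x : A.domain, c * ‖(x : X)‖ ≤ ‖A x‖)
    (B : Y →ₗ.[ℂ] X) (hBclosed : B.IsClosed) (hBdense : Dense (B.domain : Set Y))
    (hdual : A.adjoint ≤ -B) :
    -- (1) `𝒜` extends `A_s`: for `z₁ ∈ dom A` with `S z₁ ∈ X`,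
    --     `A z₁ ∈ dom A*`, `A z₁ ∈ dom B` and `B A z₁ = −A*A z₁ (= −w)`:
    (∀ (z₁ : A.domain) (w : X),
        (∀ y : A.domain, (inner ℂ (A z₁) (A y) : ℂ) = inner ℂ w (y : X)) →
        ∃ (hadj : (A z₁ : Y) ∈ A.adjoint.domain) (hB : (A z₁ : Y) ∈ B.domain),
          B ⟨A z₁, hB⟩ = -(A.adjoint ⟨A z₁, hadj⟩) ∧ B ⟨A z₁, hB⟩ = -w) ∧
      -- (2) `𝒜` is densely defined in `Z_h`:
      (∀ (z₁ : A.domain) (z₂ : X) (ε : ℝ), 0 < ε →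
        ∃ u₁ u₂ : A.domain, (A u₁ : Y) ∈ B.domain ∧
          ‖A z₁ - A u₁‖ < ε ∧ ‖z₂ - (u₂ : X)‖ < ε) ∧
      -- (3) `𝒜* ⊆ −𝒜`: if `(p₁,p₂) ∈ Z_h` and `(q₁,q₂) ∈ Z_h` satisfy the defining relation
      --     of the adjoint, `⟨q, z⟩_{Z_h} = ⟨p, 𝒜 z⟩_{Z_h}` for all `z ∈ dom 𝒜`, then
      --     `(p₁,p₂) ∈ dom 𝒜` and `𝒜 (p₁,p₂) = −(q₁,q₂)`:
      (∀ (p₁ q₁ : A.domain) (p₂ q₂ : X),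
        (∀ (z₁ z₂ : A.domain) (hz : (A z₁ : Y) ∈ B.domain),
          (inner ℂ (A q₁) (A z₁) : ℂ) + inner ℂ q₂ (z₂ : X)
            = (inner ℂ (A p₁) (A z₂) : ℂ) + inner ℂ p₂ (B ⟨A z₁, hz⟩)) →
        (q₁ : X) = -p₂ ∧
          ∃ hp : (A p₁ : Y) ∈ B.domain, B ⟨A p₁, hp⟩ = -q₂) := by
  refine ⟨?_, ?_, ?_⟩
  · -- (1)
    intro z₁ w hw
    obtain ⟨hadj, hval⟩ := skewaux_mem_adj A hAdense (A z₁) w (fun x => (hw x).symm)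
    obtain ⟨hB, hBval⟩ := skewaux_B_of_adj hdual (A z₁) hadj
    exact ⟨hadj, hB, hBval, by rw [hBval, hval]⟩
  · -- (2)
    intro z₁ z₂ ε hε
    obtain ⟨u₁, hadj, hnorm⟩ := skewaux_core A hAclosed hAdense z₁ ε hε
    obtain ⟨u₂x, hu₂mem, hu₂dist⟩ := hAdense.exists_dist_lt z₂ hε
    obtain ⟨hB, _⟩ := skewaux_B_of_adj hdual (A u₁) hadj
    exact ⟨u₁, ⟨u₂x, hu₂mem⟩, hB, hnorm, by rw [← dist_eq_norm]; exact hu₂dist⟩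
  · -- (3)
    intro p₁ q₁ p₂ q₂ hrel
    have h0dom : (A (0 : A.domain) : Y) ∈ B.domain := by
      rw [A.map_zero]; exact zero_mem _
    -- p-part: take z₁ = 0
    have hq₂ : ∀ z₂ : A.domain, (inner ℂ q₂ (z₂ : X) : ℂ) = inner ℂ (A p₁) (A z₂) := by
      intro z₂
      have h := hrel 0 z₂ h0dom
      have hB0 : B ⟨(A (0 : A.domain) : Y), h0dom⟩ = 0 := by
        have h00 : (⟨(A (0 : A.domain) : Y), h0dom⟩ : B.domain) = 0 :=
          Subtype.ext (by simpa using A.map_zero)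
        rw [h00, B.map_zero]
      have e1 : (inner ℂ (A q₁) (A (0 : A.domain)) : ℂ) = 0 := by
        rw [A.map_zero, inner_zero_right]
      rw [e1, hB0, inner_zero_right, zero_add, add_zero] at h
      exact h
    obtain ⟨hadj, hval⟩ := skewaux_mem_adj A hAdense (A p₁) q₂ hq₂
    obtain ⟨hp, hpval⟩ := skewaux_B_of_adj hdual (A p₁) hadj
    refine ⟨?_, hp, by rw [hpval, hval]⟩
    -- q-part
    obtain ⟨u, h, hsum⟩ := skewaux_vonNeumann A hAclosed hAdense ((q₁ : X) + p₂)
    set s : X := A.adjoint ⟨A u, h⟩ with hs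
    obtain ⟨hBu, hBuval⟩ := skewaux_B_of_adj hdual (A u) h
    have h1 := hrel u 0 hBu
    have e2 : (inner ℂ q₂ (((0 : A.domain) : X)) : ℂ) = 0 := by
      rw [ZeroMemClass.coe_zero, inner_zero_right]
    have e3 : (inner ℂ (A p₁) (A (0 : A.domain)) : ℂ) = 0 := by
      rw [A.map_zero, inner_zero_right]
    rw [e2, e3, hBuval, add_zero, zero_add, inner_neg_right] at h1
    -- h1 : ⟪A q₁, A u⟫ = -⟪p₂, s⟫
    have hfa := (adjoint_isFormalAdjoint hAdense) ⟨A u, h⟩ q₁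
    -- hfa : ⟪s, q₁⟫ = ⟪A u, A q₁⟫
    have h2 : (inner ℂ (A q₁) ((A u : Y)) : ℂ) = inner ℂ (q₁ : X) s := by
      calc (inner ℂ (A q₁) ((A u : Y)) : ℂ)
          = starRingEnd ℂ (inner ℂ ((A u : Y)) (A q₁) : ℂ) := (inner_conj_symm _ _).symm
        _ = starRingEnd ℂ (inner ℂ s (q₁ : X) : ℂ) := by rw [← hfa]
        _ = inner ℂ (q₁ : X) s := inner_conj_symm _ _
    have h3 : (inner ℂ ((q₁ : X) + p₂) s : ℂ) = 0 := by
      rw [inner_add_left, ← h2, h1, ← hs]; ring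
    rw [← hsum, inner_add_left] at h3
    have hfa2 := (adjoint_isFormalAdjoint hAdense) ⟨A u, h⟩ u
    have h4 : (inner ℂ ((u : X)) s : ℂ) = (‖(A u : Y)‖ : ℂ) ^ 2 := by
      calc (inner ℂ ((u : X)) s : ℂ)
          = starRingEnd ℂ (inner ℂ s ((u : X)) : ℂ) := (inner_conj_symm _ _).symm
        _ = starRingEnd ℂ (inner ℂ ((A u : Y)) ((A u : Y)) : ℂ) := by rw [← hfa2]
        _ = inner ℂ ((A u : Y)) ((A u : Y)) := by rw [inner_conj_symm]
        _ = (‖(A u : Y)‖ : ℂ) ^ 2 := inner_self_eq_norm_sq_to_K _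
    rw [h4, inner_self_eq_norm_sq_to_K] at h3
    have h6' : ((‖(A u : Y)‖ ^ 2 + ‖s‖ ^ 2 : ℝ) : ℂ) = 0 := by
      push_cast
      convert h3 using 2
      rfl
    have h6 : ‖(A u : Y)‖ ^ 2 + ‖s‖ ^ 2 = 0 := Complex.ofReal_eq_zero.mp h6'
    have hAu0 : ‖(A u : Y)‖ = 0 := by nlinarith [sq_nonneg ‖(A u : Y)‖, sq_nonneg ‖s‖]
    have hs0 : s = 0 := by
      have : ‖s‖ = 0 := by nlinarith [sq_nonneg ‖(A u : Y)‖, sq_nonneg ‖s‖]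
      exact norm_eq_zero.mp this
    have hu0 : (u : X) = 0 := by
      have := hbound u
      rw [hAu0] at this
      have hn : ‖(u : X)‖ = 0 := by nlinarith [norm_nonneg (u : X)]
      exact norm_eq_zero.mp hn
    have hz : (q₁ : X) + p₂ = 0 := by rw [← hsum, hu0, hs0, add_zero]
    exact eq_neg_of_add_eq_zero_left hz
end

section
/- Let (𝒢₁ ⊕ 𝒢₂, Λ, Π) be a boundary triplet for the dual pair (A*, −B*): Λ = (Λ₁,Λ₂) : dom A → 𝒢₁ ⊕ 𝒢₂* and Π = (Π₁,Π₂) : dom B → 𝒢₁* ⊕ 𝒢₂ are surjective and satisfy −⟨By,x⟩_X − ⟨y,Ax⟩_Y = ⟨Π₁y,Λ₁x⟩ − ⟨Π₂y,Λ₂x⟩ for all y ∈ dom B, x ∈ dom A. Define on dom 𝒜 the maps Γ₀(z₁,z₂) = (Λ₁ z₂, Π₂ A z₁) and Γ₁(z₁,z₂) = (−Π₁ A z₁, Λ₂ z₂). Then the abstract Green identity ⟨𝒜 v, w⟩_{Z_h} + ⟨v, 𝒜 w⟩_{Z_h} = ⟨Γ₀ v, Γ₁ w⟩ + ⟨Γ₁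 v, Γ₀ w⟩ holds for all v, w ∈ dom 𝒜, and Γ = (Γ₀,Γ₁) is surjective onto (𝒢₁ ⊕ 𝒢₂) × (𝒢₁ ⊕ 𝒢₂)*; i.e., (𝒢₁ ⊕ 𝒢₂, Γ₀, Γ₁) is a boundary triplet for 𝒜. -/
open LinearPMap

/-- Let `(𝒢₁ ⊕ 𝒢₂, Λ, Π)` be a boundary triplet for the dual pair
`(A*, −B*)` (with `A : X ⊇ dom A → Y` closed densely defined bounded below, and
`B : Y ⊇ dom B → X` closed densely defined, `A* ⊆ −B`): `Λ = (Λ₁,Λ₂) : dom A → 𝒢₁ ⊕ 𝒢₂*`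
and `Π = (Pi₁,Pi₂) : dom B → 𝒢₁* ⊕ 𝒢₂` are surjective and satisfy the Green identity
`−⟨By,x⟩_X − ⟨y,Ax⟩_Y = ⟨Pi₁y,Λ₁x⟩ − ⟨Pi₂y,Λ₂x⟩` (anti-dual spaces identified with the
spaces themselves via the Riesz isomorphism). Define on
`dom 𝒜 = {(z₁,z₂) ∈ X_h × X_h | A z₁ ∈ dom B}` the maps `Γ₀(z₁,z₂) = (Λ₁ z₂, Pi₂ A z₁)` and
`Γ₁(z₁,z₂) = (−Pi₁ A z₁, Λ₂ z₂)`. Then the abstract Green identity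
`⟨𝒜v,w⟩_{Z_h} + ⟨v,𝒜w⟩_{Z_h} = ⟨Γ₀v,Γ₁w⟩ + ⟨Γ₁v,Γ₀w⟩` holds for all `v,w ∈ dom 𝒜`
(with `⟨(a,b),(c,d)⟩_{Z_h} = ⟨A a, A c⟩_Y + ⟨b,d⟩_X` and `𝒜(z₁,z₂) = (z₂, B A z₁)`),
and `Γ = (Γ₀,Γ₁)` is surjective onto `(𝒢₁ ⊕ 𝒢₂) × (𝒢₁ ⊕ 𝒢₂)*`; i.e. `(𝒢₁ ⊕ 𝒢₂, Γ₀, Γ₁)`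
is a boundary triplet for `𝒜`. -/
theorem boundaryTriplet_for_secondOrder_operator
    {X Y G₁ G₂ : Type*}
    [NormedAddCommGroup X] [InnerProductSpace ℂ X] [CompleteSpace X]
    [NormedAddCommGroup Y] [InnerProductSpace ℂ Y] [CompleteSpace Y]
    [NormedAddCommGroup G₁] [InnerProductSpace ℂ G₁] [CompleteSpace G₁]
    [NormedAddCommGroup G₂] [InnerProductSpace ℂ G₂] [CompleteSpace G₂]
    (A : X →ₗ.[ℂ] Y) (hAclosed : A.IsClosed) (hAdense : Dense (A.domain : Set X))
    (c : ℝ) (hc : 0 < c) (hbound : ∀ x : A.domain, c * ‖(x : X)‖ ≤ ‖A x‖)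
    (B : Y →ₗ.[ℂ] X) (hBclosed : B.IsClosed) (hBdense : Dense (B.domain : Set Y))
    (hdual : A.adjoint ≤ -B)
    (Λ₁ : A.domain →ₗ[ℂ] G₁) (Λ₂ : A.domain →ₗ[ℂ] G₂)
    (Pi₁ : B.domain →ₗ[ℂ] G₁) (Pi₂ : B.domain →ₗ[ℂ] G₂)
    (hΛsurj : Function.Surjective (fun x : A.domain => (Λ₁ x, Λ₂ x)))
    (hPisurj : Function.Surjective (fun y : B.domain => (Pi₁ y, Pi₂ y)))
    (hGreen : ∀ (y : B.domain) (x : A.domain),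
      -(inner ℂ (B y) (x : X) : ℂ) - inner ℂ (y : Y) (A x)
        = (inner ℂ (Pi₁ y) (Λ₁ x) : ℂ) - inner ℂ (Pi₂ y) (Λ₂ x)) :
    -- the abstract Green identity for `Γ₀, Γ₁` on `dom 𝒜` …
    (∀ v w : {p : A.domain × A.domain // (A p.1 : Y) ∈ B.domain},
      ((inner ℂ (A v.1.2) (A w.1.1) : ℂ) + inner ℂ (B ⟨A v.1.1, v.2⟩) (w.1.2 : X))
        + ((inner ℂ (A v.1.1) (A w.1.2) : ℂ) + inner ℂ (v.1.2 : X) (B ⟨A w.1.1, w.2⟩))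
      = ((inner ℂ (Λ₁ v.1.2) (-(Pi₁ ⟨A w.1.1, w.2⟩)) : ℂ)
            + inner ℂ (Pi₂ ⟨A v.1.1, v.2⟩) (Λ₂ w.1.2))
        + ((inner ℂ (-(Pi₁ ⟨A v.1.1, v.2⟩)) (Λ₁ w.1.2) : ℂ)
            + inner ℂ (Λ₂ v.1.2) (Pi₂ ⟨A w.1.1, w.2⟩))) ∧
      -- … and surjectivity of `Γ = (Γ₀, Γ₁)`:
      Function.Surjective (fun v : {p : A.domain × A.domain // (A p.1 : Y) ∈ B.domain} =>
        (((Λ₁ v.1.2, Pi₂ ⟨A v.1.1, v.2⟩) : G₁ × G₂),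
          ((-(Pi₁ ⟨A v.1.1, v.2⟩), Λ₂ v.1.2) : G₁ × G₂))) := by
  constructor
  · rintro ⟨⟨v₁, v₂⟩, hv⟩ ⟨⟨w₁, w₂⟩, hw⟩
    have E₁ := hGreen ⟨A v₁, hv⟩ w₂
    have E₂ := congrArg (starRingEnd ℂ) (hGreen ⟨A w₁, hw⟩ v₂)
    simp only [_root_.map_sub, _root_.map_neg, inner_conj_symm] at E₂
    simp only [inner_neg_left, inner_neg_right]
    linear_combination -E₁ - E₂
  · rintro ⟨⟨g₁, g₂⟩, h₁, h₂⟩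
    obtain ⟨x₂, hx₂⟩ := hΛsurj (g₁, h₂)
    obtain ⟨y, hy⟩ := hPisurj (-h₁, g₂)
    set R : Submodule ℂ Y := LinearMap.range A.toFun with hR
    have hRclosed : IsClosed (R : Set Y) := by
      apply IsSeqClosed.isClosed
      intro seq z hseq hlim
      choose xs hxs using fun n => LinearMap.mem_range.mp (hseq n)
      have hcs : CauchySeq seq := hlim.cauchySeq
      have hcx : CauchySeq (fun n => (xs n : X)) := by
        rw [Metric.cauchySeq_iff] at hcs ⊢
        intro ε hε
        obtain ⟨N, hN⟩ := hcs (c * ε) (by positivity)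
        refine ⟨N, fun m hm n hn => ?_⟩
        have h1 := hbound (xs m - xs n)
        have h2 : ‖A (xs m - xs n)‖ = dist (seq m) (seq n) := by
          rw [LinearPMap.map_sub, dist_eq_norm]
          rw [show (A (xs m) : Y) = seq m from hxs m, show (A (xs n) : Y) = seq n from hxs n]
        rw [dist_eq_norm]
        have : c * ‖(xs m : X) - (xs n : X)‖ < c * ε := by
          calc c * ‖(xs m : X) - (xs n : X)‖ ≤ ‖A (xs m - xs n)‖ := h1
            _ = dist (seq m) (seq n) := h2
            _ < c * ε := hN m hm n hn
        exact lt_of_mul_lt_mul_left this hc.le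
      obtain ⟨x, hx⟩ := cauchySeq_tendsto_of_complete hcx
      have htend : Filter.Tendsto (fun n => (((xs n : X), seq n) : X × Y))
          Filter.atTop (nhds (x, z)) := hx.prodMk_nhds hlim
      have hmem : ∀ n, (((xs n : X), seq n) : X × Y) ∈ (A.graph : Set (X × Y)) := by
        intro n
        have h := A.mem_graph (xs n)
        have hxn : A (xs n) = seq n := hxs n
        rwa [hxn] at h
      have := hAclosed.mem_of_tendsto htend (Filter.Eventually.of_forall hmem)
      rw [SetLike.mem_coe, LinearPMap.mem_graph_iff] at this
      obtain ⟨x', _, hx'⟩ := this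
      exact ⟨x', hx'⟩
    haveI : CompleteSpace R := hRclosed.completeSpace_coe
    set p : R := R.orthogonalProjectionOnto (y : Y) with hp
    have hperp : (y : Y) - p ∈ Rᗮ := Submodule.sub_starProjection_mem_orthogonal (K := R) (y : Y)
    obtain ⟨x₁, hx₁⟩ := LinearMap.mem_range.mp p.2
    -- the perpendicular part is in the adjoint domain with adjoint value 0
    have hinner0 : ∀ x : A.domain, (inner ℂ ((y : Y) - (p : Y)) (A x) : ℂ) = 0 := by
      intro x
      exact (Submodule.mem_orthogonal' R _).mp hperp _ ⟨x, rfl⟩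
    have hmemadj : ((y : Y) - (p : Y)) ∈ A.adjoint.domain := by
      apply mem_adjoint_domain_of_exists
      exact ⟨0, fun x => by rw [inner_zero_left, hinner0 x]⟩
    have hadj0 : A.adjoint ⟨(y : Y) - (p : Y), hmemadj⟩ = 0 :=
      adjoint_apply_eq hAdense _ (fun x => by rw [inner_zero_left, hinner0 x])
    have hmemB : ((y : Y) - (p : Y)) ∈ B.domain := hdual.1 hmemadj
    have hB0 : B ⟨(y : Y) - (p : Y), hmemB⟩ = 0 := by
      have := hdual.2 (x := ⟨(y : Y) - (p : Y), hmemadj⟩)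
        (y := ⟨(y : Y) - (p : Y), hmemB⟩) rfl
      rw [hadj0, LinearPMap.neg_apply] at this
      exact (neg_eq_zero.mp this.symm)
    set yp : B.domain := ⟨(y : Y) - (p : Y), hmemB⟩ with hyp
    -- Pi of yp vanishes
    have hGyp : ∀ x : A.domain, (inner ℂ (Pi₁ yp) (Λ₁ x) : ℂ) = inner ℂ (Pi₂ yp) (Λ₂ x) := by
      intro x
      have := hGreen yp x
      rw [hB0, inner_zero_left, neg_zero, zero_sub] at this
      have h0 : (inner ℂ (yp : Y) (A x) : ℂ) = 0 := hinner0 x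
      rw [h0, neg_zero] at this
      linear_combination -this
    have hPi1 : Pi₁ yp = 0 := by
      obtain ⟨x, hx⟩ := hΛsurj (Pi₁ yp, 0)
      have h := hGyp x
      have hl1 : Λ₁ x = Pi₁ yp := congrArg Prod.fst hx
      have hl2 : Λ₂ x = 0 := congrArg Prod.snd hx
      rw [hl1, hl2, inner_zero_right] at h
      exact inner_self_eq_zero.mp h
    have hPi2 : Pi₂ yp = 0 := by
      obtain ⟨x, hx⟩ := hΛsurj (0, Pi₂ yp)
      have h := hGyp x
      have hl1 : Λ₁ x = 0 := congrArg Prod.fst hx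
      have hl2 : Λ₂ x = Pi₂ yp := congrArg Prod.snd hx
      rw [hl1, hl2, inner_zero_right] at h
      exact inner_self_eq_zero.mp h.symm
    have hABmem : (A x₁ : Y) ∈ B.domain := by
      have hc1 : (A x₁ : Y) = (p : Y) := hx₁
      rw [hc1, show (p : Y) = (y : Y) - ((y : Y) - (p : Y)) from (sub_sub_cancel _ _).symm]
      exact Submodule.sub_mem _ y.2 hmemB
    refine ⟨⟨(x₁, x₂), hABmem⟩, ?_⟩
    have hyeq : (⟨A x₁, hABmem⟩ : B.domain) = y - yp := by
      apply Subtype.ext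
      show (A x₁ : Y) = ((y - yp : B.domain) : Y)
      rw [show ((y - yp : B.domain) : Y) = (y : Y) - (yp : Y) from rfl]
      rw [show ((yp : B.domain) : Y) = (y : Y) - (p : Y) from rfl]
      rw [sub_sub_cancel]
      exact hx₁
    simp only
    rw [hyeq, _root_.map_sub Pi₁, _root_.map_sub Pi₂, hPi1, hPi2, sub_zero, sub_zero]
    have hy1 : Pi₁ y = -h₁ := congrArg Prod.fst hy
    have hy2 : Pi₂ y = g₂ := congrArg Prod.snd hy
    have hl1 : Λ₁ x₂ = g₁ := congrArg Prod.fst hx₂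
    have hl2 : Λ₂ x₂ = h₂ := congrArg Prod.snd hx₂
    rw [hy1, hy2, hl1, hl2, neg_neg]
end

section
/- Let A₀ be a closed, densely defined, skew-symmetric operator on a Hilbert space X with boundary triplet (𝒢, Γ₀, Γ₁) for A₀*, and let P be a bounded operator on 𝒢* with ‖P‖ ≤ 1. Then for every z ∈ dom A₀*: 2 Re⟨A₀* z, z⟩_X + ½‖P(ℛ_𝒢 Γ₀ z − Γ₁ z)‖²_{𝒢*} ≤ ½‖ℛ_𝒢 Γ₀ z + Γ₁ z‖²_{𝒢*}, with equality for all z when P is unitary. -/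
open LinearPMap

/-- Let `A₀` be a closed, densely defined, skew-symmetric operator on a
complex Hilbert space `Z` with boundary triplet `(𝒢, Γ₀, Γ₁)` for `T = A₀*` (the anti-dual
`𝒢*` being identified with `𝒢` via the Riesz isomorphism `ℛ_𝒢`, so that `Γ₀, Γ₁` both map
into `𝒢`, the pair `(Γ₀,Γ₁)` is surjective onto `𝒢 × 𝒢` and the abstract Green identity
`⟨Tf,g⟩ + ⟨f,Tg⟩ = ⟨Γ₁f,Γ₀g⟩ + ⟨Γ₀f,Γ₁g⟩` holds). Let `P ∈ L(𝒢)` with `‖P‖ ≤ 1`.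
Then for every `z ∈ dom T`:
`2 Re⟨T z, z⟩ + ½‖P(Γ₀ z − Γ₁ z)‖² ≤ ½‖Γ₀ z + Γ₁ z‖²`,
with equality for all `z` when `P` is unitary. -/
theorem scattering_passivity_inequality
    {Z G : Type*} [NormedAddCommGroup Z] [InnerProductSpace ℂ Z] [CompleteSpace Z]
    [NormedAddCommGroup G] [InnerProductSpace ℂ G] [CompleteSpace G]
    (A₀ : Z →ₗ.[ℂ] Z) (hclosed : A₀.IsClosed) (hdense : Dense (A₀.domain : Set Z))
    (hskew : A₀ ≤ -A₀.adjoint)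
    (Γ₀ Γ₁ : A₀.adjoint.domain →ₗ[ℂ] G)
    (hsurj : Function.Surjective (fun z : A₀.adjoint.domain => (Γ₀ z, Γ₁ z)))
    (hGreen : ∀ f g : A₀.adjoint.domain,
      (inner ℂ (A₀.adjoint f) (g : Z) : ℂ) + inner ℂ (f : Z) (A₀.adjoint g)
        = (inner ℂ (Γ₁ f) (Γ₀ g) : ℂ) + inner ℂ (Γ₀ f) (Γ₁ g))
    (P : G →L[ℂ] G) (hP : ‖P‖ ≤ 1) :
    (∀ z : A₀.adjoint.domain,
        2 * (inner ℂ (A₀.adjoint z) (z : Z) : ℂ).re + (1 / 2) * ‖P (Γ₀ z - Γ₁ z)‖ ^ 2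
          ≤ (1 / 2) * ‖Γ₀ z + Γ₁ z‖ ^ 2) ∧
      (((∀ u, ‖P u‖ = ‖u‖) ∧ Function.Surjective P) →
        ∀ z : A₀.adjoint.domain,
          2 * (inner ℂ (A₀.adjoint z) (z : Z) : ℂ).re + (1 / 2) * ‖P (Γ₀ z - Γ₁ z)‖ ^ 2
            = (1 / 2) * ‖Γ₀ z + Γ₁ z‖ ^ 2) := by

  have key : ∀ z : A₀.adjoint.domain,
      2 * (inner ℂ (A₀.adjoint z) (z : Z) : ℂ).re
        = (1 / 2) * ‖Γ₀ z + Γ₁ z‖ ^ 2 - (1 / 2) * ‖Γ₀ z - Γ₁ z‖ ^ 2 := by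
    intro z
    have h := hGreen z z
    have hre := congrArg Complex.re h
    have h1 : (inner ℂ (z : Z) (A₀.adjoint z) : ℂ).re = (inner ℂ (A₀.adjoint z) (z : Z) : ℂ).re := by
      have := inner_re_symm (𝕜 := ℂ) ((z : Z)) (A₀.adjoint z)
      simpa [RCLike.re_to_complex] using this
    have h2 : (inner ℂ (Γ₁ z) (Γ₀ z) : ℂ).re = (inner ℂ (Γ₀ z) (Γ₁ z) : ℂ).re := by
      have := inner_re_symm (𝕜 := ℂ) (Γ₁ z) (Γ₀ z)
      simpa [RCLike.re_to_complex] using this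
    simp only [Complex.add_re, h1, h2] at hre
    have hadd : ‖Γ₀ z + Γ₁ z‖ ^ 2
        = ‖Γ₀ z‖ ^ 2 + 2 * (inner ℂ (Γ₀ z) (Γ₁ z) : ℂ).re + ‖Γ₁ z‖ ^ 2 := by
      have := @norm_add_sq ℂ G _ _ _ (Γ₀ z) (Γ₁ z)
      simpa [RCLike.re_to_complex] using this
    have hsub : ‖Γ₀ z - Γ₁ z‖ ^ 2
        = ‖Γ₀ z‖ ^ 2 - 2 * (inner ℂ (Γ₀ z) (Γ₁ z) : ℂ).re + ‖Γ₁ z‖ ^ 2 := by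
      have := @norm_sub_sq ℂ G _ _ _ (Γ₀ z) (Γ₁ z)
      simpa [RCLike.re_to_complex] using this
    rw [hadd, hsub]
    ring_nf
    ring_nf at hre
    linarith
  constructor
  · intro z
    have hPle : ‖P (Γ₀ z - Γ₁ z)‖ ≤ ‖Γ₀ z - Γ₁ z‖ := by
      calc ‖P (Γ₀ z - Γ₁ z)‖ ≤ ‖P‖ * ‖Γ₀ z - Γ₁ z‖ := P.le_opNorm _
        _ ≤ 1 * ‖Γ₀ z - Γ₁ z‖ := by
            exact mul_le_mul_of_nonneg_right hP (norm_nonneg _)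
        _ = ‖Γ₀ z - Γ₁ z‖ := one_mul _
    have hsq : ‖P (Γ₀ z - Γ₁ z)‖ ^ 2 ≤ ‖Γ₀ z - Γ₁ z‖ ^ 2 :=
      pow_le_pow_left₀ (norm_nonneg _) hPle 2
    have := key z
    linarith
  · rintro ⟨hiso, -⟩ z
    have := key z
    rw [hiso]
    linarith
end

section
/- Let A₀ be closed, densely defined and skew-symmetric on X with boundary triplet (𝒢, Γ₀, Γ₁) for A₀*, and let P ∈ L(𝒢*). If for every z ∈ dom A₀* the inequality 2 Re⟨A₀* z, z⟩_X + ½‖P(ℛ_𝒢 Γ₀ z − Γ₁ z)‖² ≤ ½‖ℛ_𝒢 Γ₀ z + Γ₁ z‖² holds, then ‖P‖ ≤ 1; if equality holds for all z, then P is an isometry. -/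
open LinearPMap

/-- Let `A₀` be closed, densely defined and skew-symmetric on a complex
Hilbert space `Z` with boundary triplet `(𝒢, Γ₀, Γ₁)` for `T = A₀*` (duals identified via
Riesz; `(Γ₀,Γ₁)` surjective onto `𝒢 × 𝒢`, Green identity), and let `P ∈ L(𝒢)`.
If for every `z ∈ dom T` the inequality
`2 Re⟨T z, z⟩ + ½‖P(Γ₀ z − Γ₁ z)‖² ≤ ½‖Γ₀ z + Γ₁ z‖²` holds, then `‖P‖ ≤ 1`;
if equality holds for all `z`, then `P` is an isometry. -/
theorem scattering_passivity_inequality_converse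
    {Z G : Type*} [NormedAddCommGroup Z] [InnerProductSpace ℂ Z] [CompleteSpace Z]
    [NormedAddCommGroup G] [InnerProductSpace ℂ G] [CompleteSpace G]
    (A₀ : Z →ₗ.[ℂ] Z) (hclosed : A₀.IsClosed) (hdense : Dense (A₀.domain : Set Z))
    (hskew : A₀ ≤ -A₀.adjoint)
    (Γ₀ Γ₁ : A₀.adjoint.domain →ₗ[ℂ] G)
    (hsurj : Function.Surjective (fun z : A₀.adjoint.domain => (Γ₀ z, Γ₁ z)))
    (hGreen : ∀ f g : A₀.adjoint.domain,
      (inner ℂ (A₀.adjoint f) (g : Z) : ℂ) + inner ℂ (f : Z) (A₀.adjoint g)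
        = (inner ℂ (Γ₁ f) (Γ₀ g) : ℂ) + inner ℂ (Γ₀ f) (Γ₁ g))
    (P : G →L[ℂ] G) :
    ((∀ z : A₀.adjoint.domain,
        2 * (inner ℂ (A₀.adjoint z) (z : Z) : ℂ).re + (1 / 2) * ‖P (Γ₀ z - Γ₁ z)‖ ^ 2
          ≤ (1 / 2) * ‖Γ₀ z + Γ₁ z‖ ^ 2) → ‖P‖ ≤ 1) ∧
      ((∀ z : A₀.adjoint.domain,
        2 * (inner ℂ (A₀.adjoint z) (z : Z) : ℂ).re + (1 / 2) * ‖P (Γ₀ z - Γ₁ z)‖ ^ 2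
          = (1 / 2) * ‖Γ₀ z + Γ₁ z‖ ^ 2) → ∀ u, ‖P u‖ = ‖u‖) := by
  have key : ∀ z : A₀.adjoint.domain,
      2 * (inner ℂ (A₀.adjoint z) (z : Z) : ℂ).re
        = (1 / 2) * ‖Γ₀ z + Γ₁ z‖ ^ 2 - (1 / 2) * ‖Γ₀ z - Γ₁ z‖ ^ 2 := by
    intro z
    have h := hGreen z z
    have h1 : (inner ℂ (z : Z) (A₀.adjoint z) : ℂ)
        = starRingEnd ℂ (inner ℂ (A₀.adjoint z) (z : Z)) := (inner_conj_symm _ _).symm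
    have h2 : (inner ℂ (Γ₁ z) (Γ₀ z) : ℂ)
        = starRingEnd ℂ (inner ℂ (Γ₀ z) (Γ₁ z)) := (inner_conj_symm _ _).symm
    have hre := congrArg Complex.re h
    rw [h1, h2] at hre
    simp only [Complex.add_re, Complex.conj_re] at hre
    have hn1 := @norm_add_sq ℂ G _ _ _ (Γ₀ z) (Γ₁ z)
    have hn2 := @norm_sub_sq ℂ G _ _ _ (Γ₀ z) (Γ₁ z)
    have hrc : (RCLike.re (inner ℂ (Γ₀ z) (Γ₁ z) : ℂ) : ℝ)
        = (inner ℂ (Γ₀ z) (Γ₁ z) : ℂ).re := rfl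
    rw [hrc] at hn1 hn2
    nlinarith [hre, hn1, hn2]
  have core : ∀ (hyp : ∀ z : A₀.adjoint.domain,
      2 * (inner ℂ (A₀.adjoint z) (z : Z) : ℂ).re + (1 / 2) * ‖P (Γ₀ z - Γ₁ z)‖ ^ 2
        ≤ (1 / 2) * ‖Γ₀ z + Γ₁ z‖ ^ 2) (u : G), ‖P u‖ ≤ ‖u‖ := by
    intro hyp u
    obtain ⟨z, hz⟩ := hsurj (u, 0)
    have h0 : Γ₀ z = u := congrArg Prod.fst hz
    have h1 : Γ₁ z = 0 := congrArg Prod.snd hz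
    have := hyp z
    rw [key z] at this
    rw [h0, h1] at this
    simp only [sub_zero] at this
    have hsq : ‖P u‖ ^ 2 ≤ ‖u‖ ^ 2 := by nlinarith [this]
    nlinarith [norm_nonneg (P u), norm_nonneg u, hsq]
  constructor
  · intro hyp
    refine P.opNorm_le_bound zero_le_one (fun u => ?_)
    simpa using core hyp u
  · intro hyp u
    obtain ⟨z, hz⟩ := hsurj (u, 0)
    have h0 : Γ₀ z = u := congrArg Prod.fst hz
    have h1 : Γ₁ z = 0 := congrArg Prod.snd hz
    have := hyp z
    rw [key z, h0, h1] at this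
    simp only [sub_zero] at this
    have hsq : ‖P u‖ ^ 2 = ‖u‖ ^ 2 := by nlinarith [this]
    calc ‖P u‖ = Real.sqrt (‖P u‖ ^ 2) := (Real.sqrt_sq (norm_nonneg _)).symm
      _ = Real.sqrt (‖u‖ ^ 2) := by rw [hsq]
      _ = ‖u‖ := Real.sqrt_sq (norm_nonneg _)
end

section
/- Let M ∈ L(X) be self-adjoint and uniformly positive, and let X_M denote X with the inner product ⟨M⁻¹·,·⟩_X. If (𝒢, Γ₀, Γ₁) is a boundary triplet for 𝒜 on X_h × X, then (𝒢, Γ₀ ∘ [I 0; 0 M⁻¹], Γ₁ ∘ [I 0; 0 M⁻¹]) is a boundary triplet for the operator 𝒜 ∘ [I 0; 0 M⁻¹] on X_h × X_M. -/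
open LinearPMap

/-- Let `(𝒢, Γ₀, Γ₁)` be a boundary triplet for `𝒜` (the adjoint of a
closed densely defined skew-symmetric operator `A₀`) on the product Hilbert space
`X_h × X`, and let `M ∈ L(X)` be self-adjoint and uniformly positive, with (bounded) inverse
`M⁻¹`. Denote by `X_M` the space `X` with the inner product `⟨M⁻¹·,·⟩_X`. Then
`(𝒢, Γ₀ ∘ [I 0; 0 M⁻¹], Γ₁ ∘ [I 0; 0 M⁻¹])` is a boundary triplet for the operator
`𝒜 ∘ [I 0; 0 M⁻¹]` (with domain `{ z | [I 0; 0 M⁻¹] z ∈ dom 𝒜 }`) on `X_h × X_M`: the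
Green identity with respect to the `X_h × X_M` inner product holds, and the transformed
boundary maps are jointly surjective. -/
theorem boundaryTriplet_mass_density_transform
    {Xh X G : Type*} [NormedAddCommGroup Xh] [InnerProductSpace ℂ Xh] [CompleteSpace Xh]
    [NormedAddCommGroup X] [InnerProductSpace ℂ X] [CompleteSpace X]
    [NormedAddCommGroup G] [InnerProductSpace ℂ G] [CompleteSpace G]
    (A₀ : WithLp 2 (Xh × X) →ₗ.[ℂ] WithLp 2 (Xh × X))
    (hclosed : A₀.IsClosed) (hdense : Dense (A₀.domain : Set (WithLp 2 (Xh × X))))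
    (hskew : A₀ ≤ -A₀.adjoint)
    (Γ₀ Γ₁ : A₀.adjoint.domain →ₗ[ℂ] G)
    (hsurj : Function.Surjective (fun z : A₀.adjoint.domain => (Γ₀ z, Γ₁ z)))
    (hGreen : ∀ f g : A₀.adjoint.domain,
      (inner ℂ (A₀.adjoint f) (g : WithLp 2 (Xh × X)) : ℂ)
          + inner ℂ (f : WithLp 2 (Xh × X)) (A₀.adjoint g)
        = (inner ℂ (Γ₁ f) (Γ₀ g) : ℂ) + inner ℂ (Γ₀ f) (Γ₁ g))
    (M Minv : X →L[ℂ] X) (hM : IsSelfAdjoint M)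
    (α : ℝ) (hα : 0 < α) (hcoercive : ∀ x : X, α * ‖x‖ ^ 2 ≤ (inner ℂ (M x) x : ℂ).re)
    (hMinv₁ : M.comp Minv = ContinuousLinearMap.id ℂ X)
    (hMinv₂ : Minv.comp M = ContinuousLinearMap.id ℂ X) :
    -- Green identity for the transformed operator w.r.t. the `X_h × X_M` inner product:
    (∀ (z w : WithLp 2 (Xh × X))
        (hz : (WithLp.equiv 2 (Xh × X)).symm (z.ofLp.1, Minv z.ofLp.2) ∈ A₀.adjoint.domain)
        (hw : (WithLp.equiv 2 (Xh × X)).symm (w.ofLp.1, Minv w.ofLp.2) ∈ A₀.adjoint.domain),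
      ((inner ℂ (A₀.adjoint ⟨_, hz⟩).ofLp.1 w.ofLp.1 : ℂ)
            + inner ℂ (Minv (A₀.adjoint ⟨_, hz⟩).ofLp.2) w.ofLp.2)
          + ((inner ℂ z.ofLp.1 (A₀.adjoint ⟨_, hw⟩).ofLp.1 : ℂ)
            + inner ℂ (Minv z.ofLp.2) (A₀.adjoint ⟨_, hw⟩).ofLp.2)
        = (inner ℂ (Γ₁ ⟨_, hz⟩) (Γ₀ ⟨_, hw⟩) : ℂ) + inner ℂ (Γ₀ ⟨_, hz⟩) (Γ₁ ⟨_, hw⟩)) ∧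
      -- joint surjectivity of the transformed boundary maps:
      Function.Surjective
        (fun z : {z : WithLp 2 (Xh × X) //
            (WithLp.equiv 2 (Xh × X)).symm (z.ofLp.1, Minv z.ofLp.2) ∈ A₀.adjoint.domain} =>
          (Γ₀ ⟨_, z.2⟩, Γ₁ ⟨_, z.2⟩)) := by
  -- `Minv` is self-adjoint
  have hMs : star M = M := hM
  have hMinv_sa : IsSelfAdjoint Minv := by
    have h3 : M * Minv = 1 := hMinv₁
    have h1 : star Minv * M = 1 := by
      calc star Minv * M = star Minv * star M := by rw [hMs]
        _ = star (M * Minv) := by rw [star_mul]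
        _ = 1 := by rw [h3, star_one]
    calc star Minv = star Minv * (M * Minv) := by rw [h3, mul_one]
      _ = (star Minv * M) * Minv := by rw [mul_assoc]
      _ = Minv := by rw [h1, one_mul]
  have hMinv_adj : ∀ a b : X, (inner ℂ (Minv a) b : ℂ) = inner ℂ a (Minv b) := by
    intro a b
    have := ContinuousLinearMap.adjoint_inner_left Minv b a
    rwa [ContinuousLinearMap.isSelfAdjoint_iff'.mp hMinv_sa] at this
  constructor
  · intro z w hz hw
    have key := hGreen ⟨_, hz⟩ ⟨_, hw⟩
    rw [WithLp.prod_inner_apply, WithLp.prod_inner_apply] at key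
    rw [hMinv_adj]
    exact key
  · intro p
    obtain ⟨z, hzp⟩ := hsurj p
    set u : WithLp 2 (Xh × X) := (z : WithLp 2 (Xh × X)) with hu
    set v : WithLp 2 (Xh × X) := (WithLp.equiv 2 (Xh × X)).symm (u.ofLp.1, M u.ofLp.2) with hv
    have hMinvM : Minv (M u.ofLp.2) = u.ofLp.2 := by
      have := DFunLike.congr_fun hMinv₂ u.ofLp.2
      simpa using this
    have heq : (WithLp.equiv 2 (Xh × X)).symm (v.ofLp.1, Minv v.ofLp.2) = u := by
      simp only [hv, WithLp.equiv_symm_apply, WithLp.ofLp_toLp, hMinvM]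
    have hmem : (WithLp.equiv 2 (Xh × X)).symm (v.ofLp.1, Minv v.ofLp.2) ∈ A₀.adjoint.domain := by
      rw [heq]; exact z.2
    refine ⟨⟨v, hmem⟩, ?_⟩
    have hez : (⟨_, hmem⟩ : A₀.adjoint.domain) = z := Subtype.ext heq
    show (Γ₀ ⟨_, hmem⟩, Γ₁ ⟨_, hmem⟩) = p
    rw [hez]
    exact hzp
end
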